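/- arXiv:2409.03113 — 2 statements merged into one kernel-verified Lean document; each statement's English description precedes it below -/
import Mathlib

section
/- There is an algorithm which, on input an index for a connected highly computable graph G and a finite set E of edges of G, halts if and only if E ∉ Sep(G); that is, membership in Sep(G), uniformly in a description of G, is a Π⁰₁ problem. -/
/-! ## Oracle computability via oracle machine codes -/

/-- Codes for oracle (Turing) machines: partial recursive operations relative to an oracle. -/
inductive OCode : Type
  | zero
  | succ
  | left
  | right
  | oracle
  | pair (a b : OCode)
  | comp (a b : OCode)
  | prec (a b : OCode)
  | rfind (a : OCode)

/-- Evaluation of an oracle machine code relative to the oracle `O`. -/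
def OCode.eval (O : ℕ →. ℕ) : OCode → ℕ →. ℕ
  | .zero => fun _ => Part.some 0
  | .succ => fun n => Part.some (n + 1)
  | .left => fun n => Part.some n.unpair.1
  | .right => fun n => Part.some n.unpair.2
  | .oracle => O
  | .pair a b => fun n => Nat.pair <$> a.eval O n <*> b.eval O n
  | .comp a b => fun n => b.eval O n >>= a.eval O
  | .prec a b =>
      Nat.unpaired fun x y =>
        Nat.rec (motive := fun _ => Part ℕ) (a.eval O x)
          (fun i IH => IH.bind fun r => b.eval O (Nat.pair x (Nat.pair i r))) y
  | .rfind a => fun n =>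
      Nat.rfind fun m => (a.eval O (Nat.pair n m)).map fun r => decide (r = 0)

/-- `f` is partial recursive relative to the oracle `O`. -/
def RecIn (O f : ℕ →. ℕ) : Prop := ∃ c : OCode, c.eval O = f

/-- Characteristic (partial, total-valued) function of a set of naturals. -/
noncomputable def chi (A : Set ℕ) : ℕ →. ℕ := fun n => Part.some (A.indicator (fun _ => 1) n)

/-- Turing reducibility between sets of naturals: `A ≤_T B`. -/
def TuringLE (A B : Set ℕ) : Prop := RecIn (chi B) (chi A)

/-- Evaluation of the `e`-th partial computable function. -/
def evalIdx (e : ℕ) : ℕ →. ℕ := (Denumerable.ofNat Nat.Partrec.Code e).eval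

/-- The halting set `∅'`. -/
def K₀ : Set ℕ := {e | (evalIdx e e).Dom}

/-- A (numerical) encoding of oracle machine codes. -/
def OCode.encodeC : OCode → ℕ
  | .zero => 0
  | .succ => 1
  | .left => 2
  | .right => 3
  | .oracle => 4
  | .pair a b => 4 * Nat.pair a.encodeC b.encodeC + 5
  | .comp a b => 4 * Nat.pair a.encodeC b.encodeC + 6
  | .prec a b => 4 * Nat.pair a.encodeC b.encodeC + 7
  | .rfind a => 4 * Nat.pair a.encodeC a.encodeC + 8

/-- The Turing jump of a set of naturals. -/
noncomputable def jump (A : Set ℕ) : Set ℕ :=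
  {n | ∃ c : OCode, c.encodeC = n.unpair.1 ∧ (c.eval (chi A) n.unpair.2).Dom}

/-! ## Arithmetical hierarchy notions -/

/-- Computably enumerable set of naturals. -/
def CE (A : Set ℕ) : Prop := ∃ f : ℕ →. ℕ, Partrec f ∧ ∀ n, n ∈ A ↔ (f n).Dom

/-- `Π⁰₁` sets: complements of c.e. sets. -/
def Pi1 (A : Set ℕ) : Prop := CE Aᶜ

/-- `Π⁰₁`-complete sets. -/
def Pi1Complete (A : Set ℕ) : Prop :=
  Pi1 A ∧ ∀ B : Set ℕ, Pi1 B → ManyOneReducible (· ∈ B) (· ∈ A)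

/-- `Σ⁰₂` sets. -/
def Sigma2 {α : Type} [Primcodable α] (A : Set α) : Prop :=
  ∃ R : α → ℕ → ℕ → Bool,
    Computable (fun x : α × ℕ × ℕ => R x.1 x.2.1 x.2.2) ∧
    ∀ x, x ∈ A ↔ ∃ y, ∀ z, R x y z = true

/-- `Π⁰₂` sets: complements of `Σ⁰₂` sets. -/
def Pi2 {α : Type} [Primcodable α] (A : Set α) : Prop := Sigma2 Aᶜ

/-- `Π⁰₂`-complete sets of naturals. -/
def Pi2Complete (A : Set ℕ) : Prop :=
  Pi2 A ∧ ∀ B : Set ℕ, Pi2 B → ManyOneReducible (· ∈ B) (· ∈ A)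

/-- `Σ₂⁻¹` (2-c.e., d.c.e.) sets: differences of two c.e. sets. -/
def TwoCE (A : Set ℕ) : Prop := ∃ B C : Set ℕ, CE B ∧ CE C ∧ A = B \ C

/-- `Σ₂⁻¹`-complete sets. -/
def TwoCEComplete (A : Set ℕ) : Prop :=
  TwoCE A ∧ ∀ B : Set ℕ, TwoCE B → ManyOneReducible (· ∈ B) (· ∈ A)

/-- The image of a set under the canonical encoding into `ℕ`. -/
def encodeSet {α : Type} [Encodable α] (A : Set α) : Set ℕ :=
  {n | ∃ a ∈ A, Encodable.encode a = n}

/-! ## Computable graphs on `ℕ` -/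

/-- A (simple, undirected) graph with vertex set a subset of `ℕ`, described by Boolean-valued
vertex and adjacency functions. -/
structure CGraph where
  verts : ℕ → Bool
  adj : ℕ → ℕ → Bool
  symm : ∀ u v, adj u v = adj v u
  loopless : ∀ v, adj v v = false
  adj_verts : ∀ u v, adj u v = true → verts u = true ∧ verts v = true

namespace CGraph

/-- The underlying simple graph on `ℕ` (non-vertices are isolated). -/
def toSimpleGraph (G : CGraph) : SimpleGraph ℕ where
  Adj u v := G.adj u v = true
  symm := ⟨fun u v h => (G.symm v u).trans h⟩
  loopless := ⟨fun v h => by simp [G.loopless v] at h⟩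

def vertexSet (G : CGraph) : Set ℕ := {v | G.verts v = true}

def neighborSet (G : CGraph) (v : ℕ) : Set ℕ := {u | G.adj v u = true}

/-- Degree of a vertex. -/
noncomputable def degree (G : CGraph) (v : ℕ) : ℕ := (G.neighborSet v).ncard

/-- The graph obtained by deleting a finite set of (unordered) edges, given as a list of pairs. -/
def deleteEdges (G : CGraph) (E : List (ℕ × ℕ)) : SimpleGraph ℕ where
  Adj u v := G.adj u v = true ∧ (u, v) ∉ E ∧ (v, u) ∉ E
  symm := ⟨fun u v h => ⟨(G.symm v u).trans h.1, h.2.2, h.2.1⟩⟩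
  loopless := ⟨fun v h => by simp [G.loopless v] at h⟩

/-- `Comp_G(E)`: the number of infinite connected components of `G ∖ E`. -/
noncomputable def comp (G : CGraph) (E : List (ℕ × ℕ)) : ℕ :=
  {C : (G.deleteEdges E).ConnectedComponent | C.supp.Infinite}.ncard

/-- The number of ends of `G`: the supremum over finite edge sets `E` of `Comp_G(E)`. -/
noncomputable def numEnds (G : CGraph) : ℕ∞ :=
  ⨆ E : List (ℕ × ℕ), (G.comp E : ℕ∞)

/-- `Sep(G)`: finite edge sets separating `G` into at least two infinite components. -/
def Sep (G : CGraph) : Set (List (ℕ × ℕ)) := {E | 2 ≤ G.comp E}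

/-- `SepMax(G)`: finite edge sets realizing the number of ends of `G`. -/
def SepMax (G : CGraph) : Set (List (ℕ × ℕ)) := {E | (G.comp E : ℕ∞) = G.numEnds}

/-- Connectedness (of the subgraph induced on the vertex set). -/
def Connected (G : CGraph) : Prop :=
  (∃ v, G.verts v = true) ∧
    ∀ u v, G.verts u = true → G.verts v = true → G.toSimpleGraph.Reachable u v

/-- A highly computable graph: computable vertex set and adjacency, locally finite,
with computable degree function. -/
def HighlyComputable (G : CGraph) : Prop :=
  Computable G.verts ∧ Computable₂ G.adj ∧
    (∀ v, (G.neighborSet v).Finite) ∧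
    ∃ d : ℕ → ℕ, Computable d ∧ ∀ v, G.degree v = d v

/-- `e` is an index (program) for the highly computable graph `G`: the `e`-th partial computable
function answers vertex membership, adjacency, and degree queries about `G`. -/
def IndexOf (e : ℕ) (G : CGraph) : Prop :=
  (∀ v, evalIdx e (Nat.pair 0 v) = Part.some (G.verts v).toNat) ∧
  (∀ u v, evalIdx e (Nat.pair 1 (Nat.pair u v)) = Part.some (G.adj u v).toNat) ∧
  (∀ v, evalIdx e (Nat.pair 2 v) = Part.some (G.degree v))

/-- The canonical description (oracle) of a highly computable graph. -/
noncomputable def descr (G : CGraph) : ℕ →. ℕ := fun n =>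
  Part.some <|
    if n.unpair.1 = 0 then (G.verts n.unpair.2).toNat
    else if n.unpair.1 = 1 then (G.adj n.unpair.2.unpair.1 n.unpair.2.unpair.2).toNat
    else G.degree n.unpair.2

/-- The join of the description of `G` with (the characteristic function of) a set `A`. -/
noncomputable def oracleWith (G : CGraph) (A : Set ℕ) : ℕ →. ℕ := fun n =>
  if n.unpair.1 = 0 then G.descr n.unpair.2 else chi A n.unpair.2

/-- A finite simple path in `G`, as a list of vertices. -/
def IsPath (G : CGraph) (l : List ℕ) : Prop :=
  l ≠ [] ∧ (∀ v ∈ l, G.verts v = true) ∧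
    l.Chain' (fun u v => G.adj u v = true) ∧ l.Nodup

/-- A one-way infinite simple path in `G`. -/
def InfPath (G : CGraph) (p : ℕ → ℕ) : Prop :=
  (∀ n, G.adj (p n) (p (n + 1)) = true) ∧ Function.Injective p

/-- The infinite sequence `p` extends the finite list `l` (as an initial segment). -/
def Extends (p : ℕ → ℕ) (l : List ℕ) : Prop :=
  ∀ i (h : i < l.length), p i = l.get ⟨i, h⟩

/-- `Path(G)`: finite simple paths extendable to one-way infinite simple paths. -/
def PathSet (G : CGraph) : Set (List ℕ) :=
  {l | G.IsPath l ∧ ∃ p : ℕ → ℕ, G.InfPath p ∧ Extends p l}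

/-- A one-way infinite geodesic path in `G`. -/
def InfGeodesic (G : CGraph) (p : ℕ → ℕ) : Prop :=
  (∀ n, G.adj (p n) (p (n + 1)) = true) ∧
    ∀ m n : ℕ, m ≤ n → G.toSimpleGraph.dist (p m) (p n) = n - m

/-- A one-way infinite Eulerian path in the simple graph `G`: every edge traversed exactly once. -/
def OneWayEulerian (G : CGraph) (p : ℕ → ℕ) : Prop :=
  (∀ n, G.adj (p n) (p (n + 1)) = true) ∧
    ∀ u v, G.adj u v = true →
      {n : ℕ | (p n = u ∧ p (n + 1) = v) ∨ (p n = v ∧ p (n + 1) = u)}.encard = 1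

/-- A two-way infinite Eulerian path in the simple graph `G`. -/
def TwoWayEulerian (G : CGraph) (p : ℤ → ℕ) : Prop :=
  (∀ n : ℤ, G.adj (p n) (p (n + 1)) = true) ∧
    ∀ u v, G.adj u v = true →
      {n : ℤ | (p n = u ∧ p (n + 1) = v) ∨ (p n = v ∧ p (n + 1) = u)}.encard = 1

end CGraph

/-- A uniformly highly computable sequence of graphs. -/
def UniformlyHC (Gs : ℕ → CGraph) : Prop :=
  (Computable fun p : ℕ × ℕ => (Gs p.1).verts p.2) ∧
  (Computable fun p : ℕ × ℕ × ℕ => (Gs p.1).adj p.2.1 p.2.2) ∧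
  (∀ e v, ((Gs e).neighborSet v).Finite) ∧
  ∃ d : ℕ → ℕ → ℕ, Computable₂ d ∧ ∀ e v, (Gs e).degree v = d e v
/-! ## Computable multigraphs on `ℕ` -/

/-- A multigraph with vertex set a subset of `ℕ`, given by an edge-multiplicity function. -/
structure MGraph where
  verts : ℕ → Bool
  mult : ℕ → ℕ → ℕ
  symm : ∀ u v, mult u v = mult v u
  mult_verts : ∀ u v, 0 < mult u v → verts u = true ∧ verts v = true

namespace MGraph

/-- Degree of a vertex (loops counted twice). -/
noncomputable def deg (G : MGraph) (v : ℕ) : ℕ := (∑ᶠ u, G.mult v u) + G.mult v v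

/-- The underlying simple graph (parallel edges collapsed, loops discarded). -/
def toSimpleGraph (G : MGraph) : SimpleGraph ℕ where
  Adj u v := u ≠ v ∧ 0 < G.mult u v
  symm := ⟨fun u v h => ⟨h.1.symm, by rw [G.symm v u]; exact h.2⟩⟩
  loopless := ⟨fun v h => h.1 rfl⟩

/-- Connectedness (of the subgraph induced on the vertex set). -/
def Connected (G : MGraph) : Prop :=
  (∃ v, G.verts v = true) ∧
    ∀ u v, G.verts u = true → G.verts v = true → G.toSimpleGraph.Reachable u v

/-- The simple graph obtained by deleting (all parallel copies of) the listed edges. -/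
def deleteEdges (G : MGraph) (E : List (ℕ × ℕ)) : SimpleGraph ℕ where
  Adj u v := u ≠ v ∧ 0 < G.mult u v ∧ (u, v) ∉ E ∧ (v, u) ∉ E
  symm := ⟨fun u v h =>
    ⟨h.1.symm, (by rw [G.symm v u]; exact h.2.1), h.2.2.2, h.2.2.1⟩⟩
  loopless := ⟨fun v h => h.1 rfl⟩

/-- The number of infinite connected components of `G ∖ E`. -/
noncomputable def comp (G : MGraph) (E : List (ℕ × ℕ)) : ℕ :=
  {C : (G.deleteEdges E).ConnectedComponent | C.supp.Infinite}.ncard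

/-- The number of ends of the multigraph `G`. -/
noncomputable def numEnds (G : MGraph) : ℕ∞ :=
  ⨆ E : List (ℕ × ℕ), (G.comp E : ℕ∞)

/-- A highly computable multigraph. -/
def HighlyComputable (G : MGraph) : Prop :=
  Computable G.verts ∧ Computable₂ G.mult ∧
    (∀ v, (Function.support fun u => G.mult v u).Finite) ∧
    ∃ d : ℕ → ℕ, Computable d ∧ ∀ v, G.deg v = d v

/-- A one-way infinite Eulerian path in the multigraph `G`: between any two distinct vertices
`u, v` the path makes exactly `mult u v` steps, and exactly `mult u u` loop steps at each `u`. -/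
def OneWayEulerian (G : MGraph) (p : ℕ → ℕ) : Prop :=
  (∀ u v, u ≠ v →
      {n : ℕ | (p n = u ∧ p (n + 1) = v) ∨ (p n = v ∧ p (n + 1) = u)}.encard =
        (G.mult u v : ℕ∞)) ∧
  ∀ u, {n : ℕ | p n = u ∧ p (n + 1) = u}.encard = (G.mult u u : ℕ∞)

/-- A two-way infinite Eulerian path in the multigraph `G`. -/
def TwoWayEulerian (G : MGraph) (p : ℤ → ℕ) : Prop :=
  (∀ u v, u ≠ v →
      {n : ℤ | (p n = u ∧ p (n + 1) = v) ∨ (p n = v ∧ p (n + 1) = u)}.encard =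
        (G.mult u v : ℕ∞)) ∧
  ∀ u, {n : ℤ | p n = u ∧ p (n + 1) = u}.encard = (G.mult u u : ℕ∞)

end MGraph


/-- `e` is an index (program) for the highly computable multigraph `G`. -/
def MIndexOf (e : ℕ) (G : MGraph) : Prop :=
  (∀ v, evalIdx e (Nat.pair 0 v) = Part.some (G.verts v).toNat) ∧
  (∀ u v, evalIdx e (Nat.pair 1 (Nat.pair u v)) = Part.some (G.mult u v)) ∧
  (∀ v, evalIdx e (Nat.pair 2 v) = Part.some (G.deg v))

/-- A uniformly highly computable sequence of multigraphs. -/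
def MUniformlyHC (Gs : ℕ → MGraph) : Prop :=
  (Computable fun p : ℕ × ℕ => (Gs p.1).verts p.2) ∧
  (Computable fun p : ℕ × ℕ × ℕ => (Gs p.1).mult p.2.1 p.2.2) ∧
  (∀ e v, (Function.support fun u => (Gs e).mult v u).Finite) ∧
  ∃ d : ℕ → ℕ → ℕ, Computable₂ d ∧ ∀ e v, (Gs e).deg v = d e v

/-! ## Automatic presentations via explicit DFA data -/

/-- Explicit DFA data: a transition table, a start state, and a list of accepting states. -/
abbrev DFAData : Type := List (List ℕ) × ℕ × List ℕ

/-- Acceptance of a word by explicit DFA data. -/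
def dfaAccepts (D : DFAData) (w : List ℕ) : Prop :=
  w.foldl (fun q a => (D.1.getD q []).getD a 0) D.2.1 ∈ D.2.2

/-- Data of an automatic presentation: alphabet size, and DFAs for the domain language `L`, the
equality relation, and the adjacency relation (the latter two on convolutions of words). -/
abbrev PresData : Type := ℕ × DFAData × DFAData × DFAData

/-- Convolution of two words over the alphabet `{0, …, k-1}`, with padding symbol `k`;
letters of the convolution are coded by `Nat.pair`. -/
def conv (k : ℕ) (u v : List ℕ) : List ℕ :=
  (List.range (max u.length v.length)).map fun i => Nat.pair (u.getD i k) (v.getD i k)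

/-- `P` is an automatic presentation of the graph `G`. -/
def Presents (P : PresData) (G : CGraph) : Prop :=
  ∃ h : List ℕ → ℕ,
    (∀ w, dfaAccepts P.2.1 w → ∀ a ∈ w, a < P.1) ∧
    (∀ w, dfaAccepts P.2.1 w → G.verts (h w) = true) ∧
    (∀ v, G.verts v = true → ∃ w, dfaAccepts P.2.1 w ∧ h w = v) ∧
    (∀ u w, dfaAccepts P.2.1 u → dfaAccepts P.2.1 w →
      (dfaAccepts P.2.2.1 (conv P.1 u w) ↔ h u = h w)) ∧
    (∀ u w, dfaAccepts P.2.1 u → dfaAccepts P.2.1 w →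
      (dfaAccepts P.2.2.2 (conv P.1 u w) ↔ G.adj (h u) (h w) = true))

/-! For connected `G` and a vertex `v₀`, every infinite component of `G ∖ E` contains a vertex of
the finite list `v₀ :: endpoints E`. Hence `E ∉ Sep(G)` iff for all `u, v` in this list, `u` and
`v` are joined in `G ∖ E` or one of their components is finite. Both alternatives have finite
certificates that can be checked from the index by running it for `n` steps: a path, or a finite
set of vertices closed under the edges of `G ∖ E`, where closedness is witnessed by the computed
degrees (every neighbour of `t` has been found once their number reaches `deg t`). A search over
`n` and over certificates halts exactly when `E ∉ Sep(G)`. -/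

section PrimrecPredList

open Primrec

variable {α β : Type*} [Primcodable α] [Primcodable β]

theorem PrimrecPred.list_forall_mem {f : α → List β} {p : α → β → Prop} (hf : Primrec f)
    (hp : PrimrecRel p) : PrimrecPred fun a => ∀ b ∈ f a, p a b :=
  (PrimrecRel.forall_mem_list (R := fun b a => p a b) (hp.comp snd fst)).comp hf .id

theorem PrimrecPred.list_exists_mem {f : α → List β} {p : α → β → Prop} (hf : Primrec f)
    (hp : PrimrecRel p) : PrimrecPred fun a => ∃ b ∈ f a, p a b :=
  (PrimrecRel.exists_mem_list (R := fun b a => p a b) (hp.comp snd fst)).comp hf .id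

theorem PrimrecPred.nat_exists_lt {f : α → ℕ} {p : α → ℕ → Prop} (hf : Primrec f)
    (hp : PrimrecRel p) : PrimrecPred fun a => ∃ m < f a, p a m :=
  (list_exists_mem (list_range.comp hf) hp).of_eq fun _ => by simp

theorem PrimrecPred.nat_forall_lt {f : α → ℕ} {p : α → ℕ → Prop} (hf : Primrec f)
    (hp : PrimrecRel p) : PrimrecPred fun a => ∀ m < f a, p a m :=
  (list_forall_mem (list_range.comp hf) hp).of_eq fun _ => by simp

theorem PrimrecPred.list_mem [DecidableEq β] {f : α → β} {g : α → List β} (hf : Primrec f)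
    (hg : Primrec g) : PrimrecPred fun a => f a ∈ g a :=
  (list_exists_mem (p := fun a b => b = f a) hg (Primrec.eq.comp snd (hf.comp fst))).of_eq
    fun _ => by simp

theorem PrimrecPred.list_isChain [Inhabited β] {f : α → List β} {R : α → β → β → Prop}
    (hf : Primrec f) (hR : PrimrecPred fun x : α × β × β => R x.1 x.2.1 x.2.2) :
    PrimrecPred fun a => (f a).IsChain (R a) := by
  have hget (k : ℕ) : Primrec fun x : α × ℕ => (f x.1).getD (x.2 + k) default :=
    (list_getD default).comp (hf.comp fst) (nat_add.comp snd (const k))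
  refine (list_forall_mem (p := fun a i => R a ((f a).getD i default) ((f a).getD (i + 1) default))
    (list_range.comp (nat_sub.comp (list_length.comp hf) (const 1)))
    (hR.comp (fst.pair ((hget 0).pair (hget 1))))).of_eq fun a => ?_
  simp only [List.mem_range, List.isChain_iff_getElem]
  refine forall_congr' fun i => ⟨fun h hi => ?_, fun h hi => ?_⟩
  · simpa [List.getD_eq_getElem, hi, Nat.lt_of_succ_lt hi] using h (by omega)
  · have hi' : i + 1 < (f a).length := by omega
    simpa [List.getD_eq_getElem, hi', Nat.lt_of_succ_lt hi'] using h hi'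

end PrimrecPredList

theorem ComputablePred.rePred_exists {α : Type*} [Primcodable α] {p : α → ℕ → Prop}
    (hp : ComputablePred fun x : α × ℕ => p x.1 x.2) : REPred fun a => ∃ n, p a n := by
  classical
  have hf : Partrec₂ (fun a n => Part.some (decide (p a n)) : α → ℕ →. Bool) := hp.decide.partrec
  refine (Partrec.rfind hf).dom_re.of_eq fun a => Nat.rfind_dom.trans ⟨?_, ?_⟩
  · rintro ⟨n, hn, -⟩
    exact ⟨n, of_decide_eq_true (Part.mem_some_iff.mp hn).symm⟩
  · rintro ⟨n, hn⟩
    exact ⟨n, Part.mem_some_iff.mpr (decide_eq_true hn).symm, fun _ => trivial⟩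

theorem List.IsChain.eventually {ι α : Type*} {f : Filter ι} {R : α → α → Prop}
    {S : ι → α → α → Prop} {l : List α} (hS : ∀ a b, R a b → ∀ᶠ i in f, S i a b)
    (h : l.IsChain R) : ∀ᶠ i in f, l.IsChain (S i) := by
  induction h with
  | nil => exact .of_forall fun _ => .nil
  | singleton a => exact .of_forall fun _ => .singleton a
  | cons_cons hr _ ih => exact ((hS _ _ hr).and ih).mono fun _ h => h.2.cons_cons h.1

theorem Filter.Eventually.exists_lt_ofNat {α : Type*} [Denumerable α] {p : ℕ → α → Prop} {x : α}
    (h : ∀ᶠ n in Filter.atTop, p n x) :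
    ∀ᶠ n in Filter.atTop, ∃ m < n, p n (Denumerable.ofNat α m) := by
  filter_upwards [h, Filter.eventually_gt_atTop (Encodable.encode x)] with n hn hx
  exact ⟨_, hx, by rwa [Denumerable.ofNat_encode]⟩

theorem SimpleGraph.ConnectedComponent.supp_subset_of_adj_mem {V : Type*} {H : SimpleGraph V}
    {s : Set V} {u : V} (hu : u ∈ s) (hs : ∀ x ∈ s, ∀ y, H.Adj x y → y ∈ s) :
    (H.connectedComponentMk u).supp ⊆ s := by
  intro x hx
  obtain ⟨p⟩ := (ConnectedComponent.eq.mp hx).symm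
  clear hx
  induction p with
  | nil => exact hu
  | cons h _ ih => exact ih (hs _ hu _ h)

def endpoints (E : List (ℕ × ℕ)) : List ℕ := E.flatMap fun p => [p.1, p.2]

open Primrec in
theorem primrec_endpoints : Primrec endpoints :=
  list_flatMap .id <| .mk <|
    list_cons.comp (fst.comp snd) <| list_cons.comp (snd.comp snd) (const [])

namespace CGraph

open SimpleGraph

variable {G : CGraph} {E : List (ℕ × ℕ)} {v₀ : ℕ}

theorem exists_mem_endpoints_deleteEdges_reachable {u : ℕ} (p : G.toSimpleGraph.Walk u v₀) :
    ∃ s ∈ v₀ :: endpoints E, (G.deleteEdges E).Reachable u s := by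
  induction p with
  | nil => exact ⟨_, List.mem_cons_self, .refl _⟩
  | @cons x y _ hxy _ ih =>
    by_cases hE : (x, y) ∈ E ∨ (y, x) ∈ E
    · refine ⟨x, List.mem_cons_of_mem _ ?_, .refl _⟩
      simp only [endpoints, List.mem_flatMap]
      rcases hE with h | h <;> exact ⟨_, h, by simp⟩
    · obtain ⟨s, hs, hr⟩ := ih
      push Not at hE
      exact ⟨s, hs, (show (G.deleteEdges E).Adj x y from ⟨hxy, hE⟩).reachable.trans hr⟩

theorem verts_of_mem_supp {C : (G.deleteEdges E).ConnectedComponent} (hC : C.supp.Infinite)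
    {x : ℕ} (hx : x ∈ C.supp) : G.verts x = true := by
  obtain ⟨y, hy, hyx⟩ := hC.nontrivial.exists_ne x
  obtain ⟨p⟩ := ConnectedComponent.eq.mp (hx.trans hy.symm)
  cases p with
  | nil => exact absurd rfl hyx
  | cons h _ => exact (G.adj_verts _ _ h.1).1

theorem exists_mem_endpoints_mem_supp (hconn : G.Connected) (hv₀ : G.verts v₀ = true)
    {C : (G.deleteEdges E).ConnectedComponent} (hC : C.supp.Infinite) :
    ∃ s ∈ v₀ :: endpoints E, s ∈ C.supp := by
  obtain ⟨x, hx⟩ := hC.nonempty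
  obtain ⟨p⟩ := hconn.2 x v₀ (verts_of_mem_supp hC hx) hv₀
  obtain ⟨s, hs, hr⟩ := exists_mem_endpoints_deleteEdges_reachable (E := E) p
  exact ⟨s, hs, (ConnectedComponent.eq.mpr hr).symm.trans hx⟩

theorem finite_setOf_supp_infinite (hconn : G.Connected) (hv₀ : G.verts v₀ = true) :
    {C : (G.deleteEdges E).ConnectedComponent | C.supp.Infinite}.Finite :=
  ((v₀ :: endpoints E).finite_toSet.image (G.deleteEdges E).connectedComponentMk).subset
    fun _ hC => exists_mem_endpoints_mem_supp hconn hv₀ hC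

def JoinedOrFinite (G : CGraph) (E : List (ℕ × ℕ)) (u v : ℕ) : Prop :=
  (G.deleteEdges E).Reachable u v ∨ ((G.deleteEdges E).connectedComponentMk u).supp.Finite ∨
    ((G.deleteEdges E).connectedComponentMk v).supp.Finite

theorem notMem_sep_iff (hconn : G.Connected) (hv₀ : G.verts v₀ = true) :
    E ∉ G.Sep ↔ ∀ u ∈ v₀ :: endpoints E, ∀ v ∈ v₀ :: endpoints E, G.JoinedOrFinite E u v := by
  have : Finite {C : (G.deleteEdges E).ConnectedComponent | C.supp.Infinite} :=
    (finite_setOf_supp_infinite hconn hv₀).to_subtype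
  have hsep :
      E ∉ G.Sep ↔ {C : (G.deleteEdges E).ConnectedComponent | C.supp.Infinite}.Subsingleton := by
    rw [← Set.ncard_le_one_iff_subsingleton]
    show ¬2 ≤ G.comp E ↔ _
    unfold CGraph.comp
    omega
  rw [hsep]
  constructor
  · intro h u _ v _
    by_contra hne
    simp only [JoinedOrFinite, not_or] at hne
    exact hne.1 (ConnectedComponent.eq.mp (h hne.2.1 hne.2.2))
  · rintro h C₁ hC₁ C₂ hC₂
    obtain ⟨u, hu, rfl⟩ := exists_mem_endpoints_mem_supp hconn hv₀ hC₁
    obtain ⟨v, hv, rfl⟩ := exists_mem_endpoints_mem_supp hconn hv₀ hC₂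
    rcases h u hu v hv with hr | hf | hf
    · exact ConnectedComponent.eq.mpr hr
    · exact absurd hf hC₁
    · exact absurd hf hC₂

end CGraph

namespace Stage

open Nat.Partrec Filter

def query (e n x : ℕ) : Option ℕ := Code.evaln n (Denumerable.ofNat Code e) x

theorem eq_of_query_eq_some {e n x y z : ℕ} (hx : evalIdx e x = Part.some z)
    (h : query e n x = some y) : y = z :=
  Part.mem_some_iff.mp (hx ▸ Code.evaln_sound h)

theorem eventually_query_eq {e x z : ℕ} (hx : evalIdx e x = Part.some z) :
    ∀ᶠ n in atTop, query e n x = some z := by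
  obtain ⟨k, hk⟩ := Code.evaln_complete.mp (hx ▸ Part.mem_some z)
  exact eventually_atTop.2 ⟨k, fun _ hn => Code.evaln_mono hn hk⟩

def IsVert (e n v : ℕ) : Prop := query e n (Nat.pair 0 v) = some 1

def Adj (e n u v : ℕ) : Prop := query e n (Nat.pair 1 (Nat.pair u v)) = some 1

instance (e n u v : ℕ) : Decidable (Adj e n u v) := inferInstanceAs (Decidable (_ = _))

def degree (e n v : ℕ) : Option ℕ := query e n (Nat.pair 2 v)

def DelAdj (e n : ℕ) (E : List (ℕ × ℕ)) (u v : ℕ) : Prop :=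
  Adj e n u v ∧ (u, v) ∉ E ∧ (v, u) ∉ E

def IsPath (e n : ℕ) (E : List (ℕ × ℕ)) (u v : ℕ) (l : List ℕ) : Prop :=
  l.head? = some u ∧ l.getLast? = some v ∧ l.IsChain (DelAdj e n E)

def IsClosed (e n : ℕ) (E : List (ℕ × ℕ)) (u : ℕ) (T : List ℕ) : Prop :=
  u ∈ T ∧ ∀ t ∈ T, degree e n t = some ((List.range n).filter (Adj e n t ·)).length ∧
    ∀ w < n, DelAdj e n E t w → w ∈ T

def PairCertificate (e n : ℕ) (E : List (ℕ × ℕ)) (u v : ℕ) : Prop :=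
  ∃ m < n, let l := Denumerable.ofNat (List ℕ) m
    IsPath e n E u v l ∨ IsClosed e n E u l ∨ IsClosed e n E v l

def Certificate (e : ℕ) (E : List (ℕ × ℕ)) (n : ℕ) : Prop :=
  ∃ v₀ < n, IsVert e n v₀ ∧
    ∀ u ∈ v₀ :: endpoints E, ∀ v ∈ v₀ :: endpoints E, PairCertificate e n E u v

section Primrec

open Primrec

variable {α : Type*} [Primcodable α] {e n u v : α → ℕ} {E : α → List (ℕ × ℕ)}

theorem primrec_query {x : α → ℕ} (he : Primrec e) (hn : Primrec n) (hx : Primrec x) :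
    Primrec fun a => query (e a) (n a) (x a) :=
  Code.primrec_evaln.comp ((hn.pair ((Primrec.ofNat Code).comp he)).pair hx)

theorem primrecPred_isVert (he : Primrec e) (hn : Primrec n) (hv : Primrec v) :
    PrimrecPred fun a => IsVert (e a) (n a) (v a) :=
  Primrec.eq.comp (primrec_query he hn (Primrec₂.natPair.comp (const 0) hv)) (const (some 1))

theorem primrecPred_adj (he : Primrec e) (hn : Primrec n) (hu : Primrec u) (hv : Primrec v) :
    PrimrecPred fun a => Adj (e a) (n a) (u a) (v a) :=
  Primrec.eq.comp (primrec_query he hn (Primrec₂.natPair.comp (const 1)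
    (Primrec₂.natPair.comp hu hv))) (const (some 1))

theorem primrecPred_delAdj (he : Primrec e) (hn : Primrec n) (hE : Primrec E) (hu : Primrec u)
    (hv : Primrec v) : PrimrecPred fun a => DelAdj (e a) (n a) (E a) (u a) (v a) :=
  (primrecPred_adj he hn hu hv).and
    ((PrimrecPred.list_mem (hu.pair hv) hE).not.and (PrimrecPred.list_mem (hv.pair hu) hE).not)

theorem primrecPred_isPath {l : α → List ℕ} (he : Primrec e) (hn : Primrec n) (hE : Primrec E)
    (hu : Primrec u) (hv : Primrec v) (hl : Primrec l) :
    PrimrecPred fun a => IsPath (e a) (n a) (E a) (u a) (v a) (l a) :=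
  (Primrec.eq.comp (list_head?.comp hl) (option_some.comp hu)).and <|
    (Primrec.eq.comp ((list_head?.comp (list_reverse.comp hl)).of_eq fun _ => List.head?_reverse)
      (option_some.comp hv)).and <|
    PrimrecPred.list_isChain hl <| primrecPred_delAdj (he.comp fst) (hn.comp fst) (hE.comp fst)
      (fst.comp snd) (snd.comp snd)

theorem primrecPred_isClosed {T : α → List ℕ} (he : Primrec e) (hn : Primrec n) (hE : Primrec E)
    (hu : Primrec u) (hT : Primrec T) :
    PrimrecPred fun a => IsClosed (e a) (n a) (E a) (u a) (T a) := by
  have hdeg : Primrec fun x : α × ℕ => degree (e x.1) (n x.1) x.2 :=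
    primrec_query (he.comp fst) (hn.comp fst) (Primrec₂.natPair.comp (const 2) snd)
  have hcount : Primrec fun x : α × ℕ =>
      ((List.range (n x.1)).filter (Adj (e x.1) (n x.1) x.2 ·)).length :=
    list_length.comp <| (PrimrecRel.listFilter
      (R := fun (w : ℕ) (x : α × ℕ) => Adj (e x.1) (n x.1) x.2 w)
      (primrecPred_adj (he.comp (fst.comp snd)) (hn.comp (fst.comp snd)) (snd.comp snd) fst)).comp
      (list_range.comp (hn.comp fst)) .id
  refine (PrimrecPred.list_mem hu hT).and <| PrimrecPred.list_forall_mem hT <|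
    (Primrec.eq.comp hdeg (option_some.comp hcount)).and <|
    PrimrecPred.nat_forall_lt (hn.comp fst) ?_
  exact ((primrecPred_delAdj (he.comp (fst.comp fst)) (hn.comp (fst.comp fst))
    (hE.comp (fst.comp fst)) (snd.comp fst) snd).not.or
    (PrimrecPred.list_mem snd (hT.comp (fst.comp fst)))).of_eq fun _ => imp_iff_not_or.symm

theorem primrecPred_pairCertificate (he : Primrec e) (hn : Primrec n) (hE : Primrec E)
    (hu : Primrec u) (hv : Primrec v) :
    PrimrecPred fun a => PairCertificate (e a) (n a) (E a) (u a) (v a) := by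
  have hl : Primrec fun x : α × ℕ => Denumerable.ofNat (List ℕ) x.2 := (Primrec.ofNat _).comp snd
  exact PrimrecPred.nat_exists_lt hn <|
    (primrecPred_isPath (he.comp fst) (hn.comp fst) (hE.comp fst) (hu.comp fst) (hv.comp fst) hl).or
    ((primrecPred_isClosed (he.comp fst) (hn.comp fst) (hE.comp fst) (hu.comp fst) hl).or
      (primrecPred_isClosed (he.comp fst) (hn.comp fst) (hE.comp fst) (hv.comp fst) hl))

theorem primrecPred_certificate :
    PrimrecPred fun x : (ℕ × List (ℕ × ℕ)) × ℕ => Certificate x.1.1 x.1.2 x.2 := by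
  let Γ := ((ℕ × List (ℕ × ℕ)) × ℕ) × ℕ
  have he : Primrec fun y : Γ => y.1.1.1 := fst.comp (fst.comp fst)
  have hE : Primrec fun y : Γ => y.1.1.2 := snd.comp (fst.comp fst)
  have hn : Primrec fun y : Γ => y.1.2 := snd.comp fst
  have hS : Primrec fun y : Γ => y.2 :: endpoints y.1.1.2 :=
    list_cons.comp snd (primrec_endpoints.comp hE)
  refine PrimrecPred.nat_exists_lt snd <| (primrecPred_isVert he hn snd).and <|
    PrimrecPred.list_forall_mem hS <| PrimrecPred.list_forall_mem (hS.comp fst) ?_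
  exact primrecPred_pairCertificate (he.comp (fst.comp fst)) (hn.comp (fst.comp fst))
    (hE.comp (fst.comp fst)) (snd.comp fst) snd

end Primrec

end Stage

namespace CGraph.IndexOf

open Filter Stage SimpleGraph

variable {e n : ℕ} {G : CGraph} {E : List (ℕ × ℕ)} {u v t : ℕ}

theorem verts_of_isVert (hidx : IndexOf e G) (h : IsVert e n v) : G.verts v = true :=
  Bool.toNat_eq_one.mp (eq_of_query_eq_some (hidx.1 v) h).symm

theorem eventually_isVert (hidx : IndexOf e G) (h : G.verts v = true) :
    ∀ᶠ n in atTop, IsVert e n v := by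
  simpa [IsVert, h] using eventually_query_eq (hidx.1 v)

theorem adj_of_adj (hidx : IndexOf e G) (h : Stage.Adj e n u v) : G.adj u v = true :=
  Bool.toNat_eq_one.mp (eq_of_query_eq_some (hidx.2.1 u v) h).symm

theorem eventually_adj (hidx : IndexOf e G) (h : G.adj u v = true) :
    ∀ᶠ n in atTop, Stage.Adj e n u v := by
  simpa [Stage.Adj, h] using eventually_query_eq (hidx.2.1 u v)

theorem deleteEdges_adj_of_delAdj (hidx : IndexOf e G) (h : DelAdj e n E u v) :
    (G.deleteEdges E).Adj u v :=
  ⟨hidx.adj_of_adj h.1, h.2⟩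

theorem eventually_delAdj (hidx : IndexOf e G) (h : (G.deleteEdges E).Adj u v) :
    ∀ᶠ n in atTop, DelAdj e n E u v :=
  (hidx.eventually_adj h.1).mono fun _ hn => ⟨hn, h.2⟩

theorem degree_eq_of_degree (hidx : IndexOf e G) {d : ℕ} (h : Stage.degree e n v = some d) :
    d = G.degree v :=
  eq_of_query_eq_some (hidx.2.2 v) h

theorem eventually_degree (hidx : IndexOf e G) (v : ℕ) :
    ∀ᶠ n in atTop, Stage.degree e n v = some (G.degree v) :=
  eventually_query_eq (hidx.2.2 v)

/-- Every neighbour counted at stage `n` is a true neighbour, so the count reaches the degree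
exactly when all neighbours of `t` are below `n` and visible at stage `n`. -/
theorem length_filter_adj_eq_degree_iff (hidx : IndexOf e G) (hfin : (G.neighborSet t).Finite) :
    ((List.range n).filter (Stage.Adj e n t ·)).length = G.degree t ↔
      ∀ w ∈ G.neighborSet t, w < n ∧ Stage.Adj e n t w := by
  set L := (List.range n).filter (Stage.Adj e n t ·)
  have hmem : ∀ w, w ∈ (L.toFinset : Set ℕ) ↔ w < n ∧ Stage.Adj e n t w := by simp [L]
  have hsub : (L.toFinset : Set ℕ) ⊆ G.neighborSet t := fun w hw =>
    hidx.adj_of_adj ((hmem w).mp hw).2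
  rw [← List.toFinset_card_of_nodup (List.nodup_range.filter _), ← Set.ncard_coe_finset,
    CGraph.degree]
  constructor
  · intro h w hw
    exact (hmem w).mp ((Set.eq_of_subset_of_ncard_le hsub h.ge hfin).symm ▸ hw)
  · intro h
    exact congrArg Set.ncard (hsub.antisymm fun w hw => (hmem w).mpr (h w hw))

theorem reachable_of_isPath (hidx : IndexOf e G) {l : List ℕ} (h : Stage.IsPath e n E u v l) :
    (G.deleteEdges E).Reachable u v := by
  obtain ⟨hu, hv, hl⟩ := h
  have hne : l ≠ [] := by rintro rfl; simp at hu
  rw [List.head?_eq_some_head hne, Option.some_inj] at hu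
  rw [List.getLast?_eq_some_getLast hne, Option.some_inj] at hv
  rw [reachable_iff_reflTransGen, ← hu, ← hv]
  exact List.relationReflTransGen_of_exists_isChain l
    (hl.imp fun _ _ => hidx.deleteEdges_adj_of_delAdj) hne

theorem exists_eventually_isPath (hidx : IndexOf e G) (h : (G.deleteEdges E).Reachable u v) :
    ∃ l, ∀ᶠ n in atTop, Stage.IsPath e n E u v l := by
  obtain ⟨l, hne, hl, hu, hv⟩ :=
    List.exists_isChain_ne_nil_of_relationReflTransGen ((reachable_iff_reflTransGen u v).mp h)
  refine ⟨l, (hl.eventually fun _ _ => hidx.eventually_delAdj).mono fun _ hn => ?_⟩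
  exact ⟨by rw [List.head?_eq_some_head hne, hu], by rw [List.getLast?_eq_some_getLast hne, hv], hn⟩

theorem finite_supp_of_isClosed (hidx : IndexOf e G) (hlf : ∀ v, (G.neighborSet v).Finite)
    {T : List ℕ} (h : IsClosed e n E u T) :
    ((G.deleteEdges E).connectedComponentMk u).supp.Finite := by
  refine T.finite_toSet.subset (ConnectedComponent.supp_subset_of_adj_mem h.1 ?_)
  intro t ht w hw
  obtain ⟨hd, hT⟩ := h.2 t ht
  obtain ⟨hwn, hadj⟩ :=
    (hidx.length_filter_adj_eq_degree_iff (hlf t)).mp (hidx.degree_eq_of_degree hd) w hw.1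
  exact hT w hwn ⟨hadj, hw.2⟩

theorem exists_eventually_isClosed (hidx : IndexOf e G) (hlf : ∀ v, (G.neighborSet v).Finite)
    (h : ((G.deleteEdges E).connectedComponentMk u).supp.Finite) :
    ∃ T, ∀ᶠ n in atTop, IsClosed e n E u T := by
  refine ⟨h.toFinset.toList, ?_⟩
  have hT : ∀ t ∈ h.toFinset.toList, ∀ᶠ n in atTop,
      Stage.degree e n t = some ((List.range n).filter (Stage.Adj e n t ·)).length ∧
        ∀ w < n, DelAdj e n E t w → w ∈ h.toFinset.toList := by
    intro t ht
    have hnbr : ∀ᶠ n in atTop, ∀ w ∈ G.neighborSet t, w < n ∧ Stage.Adj e n t w :=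
      (eventually_all_finite (hlf t)).2 fun w hw =>
        (eventually_gt_atTop w).and (hidx.eventually_adj hw)
    filter_upwards [hidx.eventually_degree t, hnbr] with n hd hn
    refine ⟨by rw [hd, (hidx.length_filter_adj_eq_degree_iff (hlf t)).mpr hn], ?_⟩
    intro w _ hw
    simp only [Finset.mem_toList, Set.Finite.mem_toFinset] at ht ⊢
    exact (ConnectedComponent.eq.mpr (hidx.deleteEdges_adj_of_delAdj hw).reachable).symm.trans ht
  filter_upwards [(eventually_all_finite h.toFinset.toList.finite_toSet).2 hT] with n hn
  exact ⟨by simp, hn⟩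

theorem joinedOrFinite_of_pairCertificate (hidx : IndexOf e G)
    (hlf : ∀ v, (G.neighborSet v).Finite) (h : PairCertificate e n E u v) :
    G.JoinedOrFinite E u v := by
  obtain ⟨_, _, hp | hu | hv⟩ := h
  · exact .inl (hidx.reachable_of_isPath hp)
  · exact .inr (.inl (hidx.finite_supp_of_isClosed hlf hu))
  · exact .inr (.inr (hidx.finite_supp_of_isClosed hlf hv))

theorem eventually_pairCertificate (hidx : IndexOf e G) (hlf : ∀ v, (G.neighborSet v).Finite)
    (h : G.JoinedOrFinite E u v) : ∀ᶠ n in atTop, PairCertificate e n E u v := by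
  suffices ∃ l, ∀ᶠ n in atTop,
      Stage.IsPath e n E u v l ∨ IsClosed e n E u l ∨ IsClosed e n E v l by
    obtain ⟨l, hl⟩ := this
    exact hl.exists_lt_ofNat (p := fun n l =>
      Stage.IsPath e n E u v l ∨ IsClosed e n E u l ∨ IsClosed e n E v l)
  rcases h with hr | hu | hv
  · obtain ⟨l, hl⟩ := hidx.exists_eventually_isPath hr
    exact ⟨l, hl.mono fun _ => Or.inl⟩
  · obtain ⟨T, hT⟩ := hidx.exists_eventually_isClosed hlf hu
    exact ⟨T, hT.mono fun _ h => .inr (.inl h)⟩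
  · obtain ⟨T, hT⟩ := hidx.exists_eventually_isClosed hlf hv
    exact ⟨T, hT.mono fun _ h => .inr (.inr h)⟩

theorem exists_certificate_iff (hidx : IndexOf e G) (hlf : ∀ v, (G.neighborSet v).Finite)
    (hconn : G.Connected) : (∃ n, Certificate e E n) ↔ E ∉ G.Sep := by
  constructor
  · rintro ⟨n, v₀, -, hv₀, h⟩
    exact (notMem_sep_iff hconn (hidx.verts_of_isVert hv₀)).mpr fun u hu v hv =>
      hidx.joinedOrFinite_of_pairCertificate hlf (h u hu v hv)
  · intro hE
    obtain ⟨v₀, hv₀⟩ := hconn.1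
    have hS := (notMem_sep_iff hconn hv₀).mp hE
    have hall : ∀ᶠ n in atTop, ∀ u ∈ v₀ :: endpoints E, ∀ v ∈ v₀ :: endpoints E,
        PairCertificate e n E u v :=
      (eventually_all_finite (List.finite_toSet _)).2 fun u hu =>
        (eventually_all_finite (List.finite_toSet _)).2 fun v hv =>
          hidx.eventually_pairCertificate hlf (hS u hu v hv)
    obtain ⟨n, hn, hvert, hall⟩ :=
      ((eventually_gt_atTop v₀).and ((hidx.eventually_isVert hv₀).and hall)).exists
    exact ⟨n, v₀, hn, hvert, hall⟩

end CGraph.IndexOf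

/-- There is an algorithm which, on input an index for a connected highly
computable graph `G` and a finite edge set `E`, halts iff `E ∉ Sep(G)`: membership in `Sep(G)`,
uniformly in a description of `G`, is a `Π⁰₁` problem. -/
theorem stmt_3 :
    ∃ F : ℕ × List (ℕ × ℕ) →. Unit, Partrec F ∧
      ∀ (e : ℕ) (G : CGraph), CGraph.IndexOf e G → G.HighlyComputable → G.Connected →
        ∀ E : List (ℕ × ℕ), (F (e, E)).Dom ↔ E ∉ G.Sep := by
  refine ⟨fun x => Part.assert (∃ n, Stage.Certificate x.1 x.2 n) fun _ => Part.some (),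
    ComputablePred.rePred_exists Stage.primrecPred_certificate.computablePred, ?_⟩
  intro e G hidx hHC hconn E
  have h := hidx.exists_certificate_iff (E := E) hHC.2.2.1 hconn
  exact ⟨fun hF => h.mp hF.1, fun hE => ⟨h.mpr hE, trivial⟩⟩
end

section
/- There is a uniformly highly computable sequence (G_e)_{e∈ℕ} of graphs, each of which is a tree with exactly two ends, such that: (1) the set {e ∈ ℕ : the single edge {0,1} belongs to Sep(G_e)} is Π⁰₁-complete; and (2) every function f with f(e) ∈ Sep(G_e) for all e ∈ ℕ satisfies f ≥_T ∅', i.e., f computes the halting set. -/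
/-!
`ladder b` has the even numbers and the odd numbers as its two sides, joined by the edge
`{0, 1}`; the even side is cut between `2k` and `2k + 2`, and `2k + 2` re-attached by the rung
`{2k + 1, 2k + 2}`, exactly where the flag `b k` is raised. Every vertex but `0` has a single
smaller neighbour, so the ladder is a tree, and with at most one flag it has two ends.
Raise the flag of the `e`-th ladder at the step where program `e` halts on input `e`. Then `{0, 1}`
separates two infinite pieces iff `e` never halts; and if `e` halts after `t + 1` steps, every
separating set has to cut the ladder above `2t`, so the size of any separating set bounds the
halting time and thereby decides `e ∈ K₀`.
-/

namespace SimpleGraph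

variable {V : Type*} {H : SimpleGraph V}

lemma connectedComponentMk_ne_of_forall_adj {β : Type*} (s : V → β)
    (hs : ∀ u v, H.Adj u v → s u = s v) {a c : V} (hac : s a ≠ s c) :
    H.connectedComponentMk a ≠ H.connectedComponentMk c := by
  intro hmk
  obtain ⟨w⟩ := ConnectedComponent.exact hmk
  clear hmk
  induction w with
  | nil => exact hac rfl
  | cons hadj _ ih => exact ih ((hs _ _ hadj).symm.trans_ne hac)

lemma reachable_of_forall_adj_succ {r : ℕ → V} {m : ℕ}
    (hr : ∀ k, m ≤ k → H.Adj (r k) (r (k + 1))) {k : ℕ} (hk : m ≤ k) :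
    H.Reachable (r m) (r k) := by
  induction k, hk using Nat.le_induction with
  | base => rfl
  | succ k hk ih => exact ih.trans (hr k hk).reachable

lemma setOf_supp_infinite_subset_image {S A : Set V} (hS : S.Finite)
    (hA : ∀ v ∉ S, ∃ a ∈ A, H.Reachable v a) :
    {C : H.ConnectedComponent | C.supp.Infinite} ⊆ H.connectedComponentMk '' A := by
  intro C hC
  obtain ⟨v, hvC, hvS⟩ := hC.exists_notMem_finite hS
  obtain ⟨a, ha, hva⟩ := hA v hvS
  exact ⟨a, ha, (ConnectedComponent.sound hva).symm.trans hvC⟩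

lemma ncard_setOf_supp_infinite_le {S A : Set V} (hS : S.Finite) (hAfin : A.Finite)
    (hA : ∀ v ∉ S, ∃ a ∈ A, H.Reachable v a) :
    {C : H.ConnectedComponent | C.supp.Infinite}.ncard ≤ A.ncard :=
  (Set.ncard_le_ncard (setOf_supp_infinite_subset_image hS hA) (hAfin.image _)).trans
    (Set.ncard_image_le hAfin)

lemma two_le_ncard_setOf_supp_infinite {a c : V}
    (hfin : {C : H.ConnectedComponent | C.supp.Infinite}.Finite)
    (hne : H.connectedComponentMk a ≠ H.connectedComponentMk c)
    (ha : (H.connectedComponentMk a).supp.Infinite)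
    (hc : (H.connectedComponentMk c).supp.Infinite) :
    2 ≤ {C : H.ConnectedComponent | C.supp.Infinite}.ncard := by
  rw [← Set.ncard_pair hne]
  exact Set.ncard_le_ncard (Set.insert_subset ha (Set.singleton_subset_iff.mpr hc)) hfin

lemma connectedComponentMk_supp_infinite {H : SimpleGraph ℕ} {a : ℕ}
    (h : ∀ n, ∃ v, n < v ∧ H.Reachable a v) : (H.connectedComponentMk a).supp.Infinite :=
  Set.infinite_of_forall_exists_gt fun n =>
    let ⟨v, hnv, hav⟩ := h n
    ⟨v, (ConnectedComponent.mem_supp_iff _ _).mpr (ConnectedComponent.sound hav).symm, hnv⟩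

end SimpleGraph

open SimpleGraph

namespace CGraph

lemma neighborSet_eq_filter_range {G : CGraph} {d : ℕ}
    (hd : ∀ u v, G.adj u v = true → v ≤ u + d) (v : ℕ) :
    G.neighborSet v = ↑((Finset.range (v + d + 1)).filter fun u => G.adj v u = true) := by
  ext u
  simp only [neighborSet, Set.mem_ofPred_eq, Finset.coe_filter, Finset.mem_range]
  exact ⟨fun h => ⟨Nat.lt_succ_of_le (hd v u h), h⟩, And.right⟩

lemma deleteEdges_adj_of_le {G : CGraph} {E : List (ℕ × ℕ)} {M u v : ℕ}
    (hE : ∀ x ∈ E, x.1 < M ∨ x.2 < M) (h : G.adj u v = true) (hu : M ≤ u) (hv : M ≤ v) :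
    (G.deleteEdges E).Adj u v :=
  ⟨h, fun hx => by have := hE _ hx; omega, fun hx => by have := hE _ hx; omega⟩

def ofParent (p : ℕ → ℕ) (hp : ∀ v, 0 < v → p v < v) : CGraph where
  verts _ := true
  adj u v := decide ((0 < u ∧ p u = v) ∨ (0 < v ∧ p v = u))
  symm u v := by simp only [or_comm]
  loopless v := by
    simp only [or_self, decide_eq_false_iff_not, not_and]
    exact fun hv => (hp v hv).ne
  adj_verts _ _ _ := ⟨rfl, rfl⟩

section OfParent

variable {p : ℕ → ℕ} {hp : ∀ v, 0 < v → p v < v}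

@[simp] lemma ofParent_adj {u v : ℕ} :
    (ofParent p hp).adj u v = true ↔ (0 < u ∧ p u = v) ∨ (0 < v ∧ p v = u) :=
  decide_eq_true_iff

lemma ofParent_adj_parent {v : ℕ} (hv : 0 < v) : (ofParent p hp).adj v (p v) = true :=
  ofParent_adj.mpr (Or.inl ⟨hv, rfl⟩)

lemma eq_parent_of_ofParent_adj {u v : ℕ} (h : (ofParent p hp).adj u v = true) (huv : u < v) :
    u = p v := by
  rcases ofParent_adj.mp h with ⟨hu, rfl⟩ | ⟨_, rfl⟩
  · exact absurd (hp u hu) huv.not_gt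
  · rfl

lemma ofParent_reachable_zero (v : ℕ) : (ofParent p hp).toSimpleGraph.Reachable 0 v := by
  induction v using Nat.strong_induction_on with
  | _ v ih =>
    rcases Nat.eq_zero_or_pos v with rfl | hv
    · rfl
    · have hadj : (ofParent p hp).toSimpleGraph.Adj v (p v) := ofParent_adj_parent hv
      exact (ih (p v) (hp v hv)).trans hadj.symm.reachable

lemma ofParent_connected : (ofParent p hp).Connected :=
  ⟨⟨0, rfl⟩, fun u v _ _ => (ofParent_reachable_zero u).symm.trans (ofParent_reachable_zero v)⟩

/-- On a cycle, the largest vertex `m` would have two distinct smaller neighbours, but its only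
smaller neighbour is `p m`. -/
lemma ofParent_isAcyclic : (ofParent p hp).toSimpleGraph.IsAcyclic := by
  intro v c hc
  have hne : c.support.toFinset.Nonempty := ⟨v, by simp⟩
  set m := c.support.toFinset.max' hne
  have hm : m ∈ c.support := List.mem_toFinset.mp (Finset.max'_mem _ hne)
  set c' := c.rotate m hm
  have hc' : c'.IsCycle := hc.rotate hm
  have smaller_eq_parent : ∀ x, (ofParent p hp).toSimpleGraph.Adj m x → x ∈ c'.support →
      x = p m := fun x hadj hx =>
    eq_parent_of_ofParent_adj hadj.symm <|
      lt_of_le_of_ne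
        (Finset.le_max' _ _ (List.mem_toFinset.mpr ((c.mem_support_rotate_iff m hm).mp hx)))
        hadj.ne'
  exact hc'.snd_ne_penultimate <|
    (smaller_eq_parent _ (c'.adj_snd hc'.not_nil) (c'.getVert_mem_support 1)).trans
      (smaller_eq_parent _ (c'.adj_penultimate hc'.not_nil).symm
        (c'.getVert_mem_support _)).symm

lemma ofParent_deleteEdges_connectedComponentMk_ne {E : List (ℕ × ℕ)} {β : Type*} (s : ℕ → β)
    (hs : ∀ v, 0 < v → (v, p v) ∉ E → (p v, v) ∉ E → s (p v) = s v) {a c : ℕ}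
    (hac : s a ≠ s c) :
    ((ofParent p hp).deleteEdges E).connectedComponentMk a ≠
      ((ofParent p hp).deleteEdges E).connectedComponentMk c := by
  refine connectedComponentMk_ne_of_forall_adj s ?_ hac
  rintro u v ⟨hadj, huv, hvu⟩
  rcases ofParent_adj.mp hadj with ⟨hu, rfl⟩ | ⟨hv, rfl⟩
  · exact (hs u hu huv hvu).symm
  · exact hs v hv hvu huv

end OfParent

end CGraph

/-- The neighbours of `v` are found among `0, …, v + d`, which makes the degree computable. -/
lemma uniformlyHC_of_adj_le_add {Gs : ℕ → CGraph} (d : ℕ)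
    (hverts : Computable fun x : ℕ × ℕ => (Gs x.1).verts x.2)
    (hadj : Primrec fun x : ℕ × ℕ × ℕ => (Gs x.1).adj x.2.1 x.2.2)
    (hd : ∀ e u v, (Gs e).adj u v = true → v ≤ u + d) : UniformlyHC Gs := by
  have hnbr := fun e => CGraph.neighborSet_eq_filter_range (hd e)
  refine ⟨hverts, hadj.to_comp, fun e v => hnbr e v ▸ Finset.finite_toSet _,
    fun e v => ((List.range (v + d + 1)).filter fun u => (Gs e).adj v u = true).length,
    ?_, fun e v => ?_⟩
  · have hrel : PrimrecRel fun (u : ℕ) (x : ℕ × ℕ) => (Gs x.1).adj x.2 u = true :=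
      Primrec.eq.comp (hadj.comp ((Primrec.fst.comp Primrec.snd).pair
        ((Primrec.snd.comp Primrec.snd).pair Primrec.fst))) (Primrec.const true)
    exact (Primrec.list_length.comp (hrel.listFilter.comp
      (Primrec.list_range.comp (Primrec.nat_add.comp Primrec.snd (Primrec.const (d + 1))))
      Primrec.id)).to_comp
  · rw [CGraph.degree, hnbr, Set.ncard_coe_finset]
    rfl

def edgeBound (E : List (ℕ × ℕ)) : ℕ := (E.map fun x => x.1 + x.2).sum

lemma add_le_edgeBound {E : List (ℕ × ℕ)} {x : ℕ × ℕ} (hx : x ∈ E) : x.1 + x.2 ≤ edgeBound E :=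
  List.le_sum_of_mem (List.mem_map_of_mem hx)

/-- The parent function of the ladder: vertex `2k + 3` hangs below `2k + 1` (and `1` below `0`,
because `1 - 2 = 0` in `ℕ`); vertex `2k + 2` hangs below `2k`, unless the flag `b k` is raised,
in which case it hangs below `2k + 1`. -/
def ladderParent (b : ℕ → Bool) (v : ℕ) : ℕ :=
  if v % 2 = 1 then v - 2 else if b (v / 2 - 1) then v - 1 else v - 2

lemma ladderParent_lt (b : ℕ → Bool) {v : ℕ} (hv : 0 < v) : ladderParent b v < v := by
  unfold ladderParent
  split_ifs <;> omega

def ladder (b : ℕ → Bool) : CGraph := CGraph.ofParent (ladderParent b) fun _ => ladderParent_lt b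

section Ladder

variable {b : ℕ → Bool}

lemma ladder_adj_le_add {u v : ℕ} (h : (ladder b).adj u v = true) : v ≤ u + 2 := by
  rcases CGraph.ofParent_adj.mp h with ⟨hu, rfl⟩ | ⟨_, rfl⟩
  · exact ((ladderParent_lt b hu).trans (Nat.lt_add_of_pos_right two_pos)).le
  · unfold ladderParent
    split_ifs <;> omega

lemma ladder_adj_odd (k : ℕ) : (ladder b).adj (2 * k + 1) (2 * k + 3) = true :=
  CGraph.ofParent_adj.mpr (Or.inr ⟨by omega, by simp [ladderParent]⟩)

lemma ladder_adj_even {k : ℕ} (hk : b k = false) : (ladder b).adj (2 * k) (2 * k + 2) = true :=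
  CGraph.ofParent_adj.mpr (Or.inr ⟨by omega, by simp [ladderParent, hk]⟩)

lemma ladder_adj_rung {k : ℕ} (hk : b k = true) :
    (ladder b).adj (2 * k + 1) (2 * k + 2) = true :=
  CGraph.ofParent_adj.mpr (Or.inr ⟨by omega, by simp [ladderParent, hk]⟩)

section Rays

variable {E : List (ℕ × ℕ)} {M m k : ℕ}

lemma ladder_reachable_odd (hE : ∀ x ∈ E, x.1 < M ∨ x.2 < M) (hM : M ≤ 2 * m + 1)
    (hk : m ≤ k) : ((ladder b).deleteEdges E).Reachable (2 * m + 1) (2 * k + 1) :=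
  reachable_of_forall_adj_succ (r := fun k => 2 * k + 1)
    (fun j hj => CGraph.deleteEdges_adj_of_le hE (ladder_adj_odd j) (by omega) (by omega)) hk

lemma ladder_reachable_even (hE : ∀ x ∈ E, x.1 < M ∨ x.2 < M) (hM : M ≤ 2 * m)
    (hb : ∀ j, m ≤ j → b j = false) (hk : m ≤ k) :
    ((ladder b).deleteEdges E).Reachable (2 * m) (2 * k) :=
  reachable_of_forall_adj_succ (r := fun k => 2 * k)
    (fun j hj => CGraph.deleteEdges_adj_of_le hE (ladder_adj_even (hb j hj)) (by omega)
      (by omega)) hk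

/-- Above all flags and all deleted edges, the two sides of the ladder are intact rays. -/
lemma ladder_reachable_of_le (hE : ∀ x ∈ E, x.1 < 2 * m ∨ x.2 < 2 * m)
    (hb : ∀ j, m ≤ j → b j = false) {v : ℕ} (hv : 2 * m ≤ v) :
    ((ladder b).deleteEdges E).Reachable v (2 * m) ∨
      ((ladder b).deleteEdges E).Reachable v (2 * m + 1) := by
  obtain ⟨j, rfl | rfl⟩ := Nat.even_or_odd' v
  · exact Or.inl (ladder_reachable_even hE le_rfl hb (by omega)).symm
  · exact Or.inr (ladder_reachable_odd hE (by omega) (by omega)).symm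

lemma ladder_supp_odd_infinite (hE : ∀ x ∈ E, x.1 < M ∨ x.2 < M) (hM : M ≤ 2 * m + 1) :
    (((ladder b).deleteEdges E).connectedComponentMk (2 * m + 1)).supp.Infinite :=
  connectedComponentMk_supp_infinite fun n =>
    ⟨2 * (m + n) + 1, by omega, ladder_reachable_odd hE hM (by omega)⟩

lemma ladder_supp_even_infinite (hE : ∀ x ∈ E, x.1 < M ∨ x.2 < M) (hM : M ≤ 2 * m)
    (hb : ∀ j, m ≤ j → b j = false) :
    (((ladder b).deleteEdges E).connectedComponentMk (2 * m)).supp.Infinite :=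
  connectedComponentMk_supp_infinite fun n =>
    ⟨2 * (m + n + 1), by omega, ladder_reachable_even hE hM hb (by omega)⟩

end Rays

section AtMostOneFlag

variable (hb : {k | b k = true}.Subsingleton)
include hb

lemma exists_ladder_bound (E : List (ℕ × ℕ)) :
    ∃ m, (∀ x ∈ E, x.1 < 2 * m ∨ x.2 < 2 * m) ∧ ∀ j, m ≤ j → b j = false := by
  obtain ⟨t, ht⟩ := hb.finite.bddAbove
  refine ⟨edgeBound E + t + 1, fun x hx => ?_, fun j hj => ?_⟩
  · have := add_le_edgeBound hx
    omega
  · exact Bool.eq_false_iff.mpr fun hbj => by have := ht hbj; omega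

lemma ladder_setOf_supp_infinite_subset (E : List (ℕ × ℕ)) :
    ∃ a c, {C : ((ladder b).deleteEdges E).ConnectedComponent | C.supp.Infinite} ⊆
      ((ladder b).deleteEdges E).connectedComponentMk '' {a, c} := by
  obtain ⟨m, hE, hbm⟩ := exists_ladder_bound hb E
  refine ⟨2 * m, 2 * m + 1, setOf_supp_infinite_subset_image (Set.finite_Iio (2 * m)) ?_⟩
  intro v hv
  rcases ladder_reachable_of_le hE hbm (not_lt.mp hv) with h | h
  · exact ⟨_, Set.mem_insert _ _, h⟩
  · exact ⟨_, Set.mem_insert_of_mem _ rfl, h⟩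

lemma ladder_setOf_supp_infinite_finite (E : List (ℕ × ℕ)) :
    {C : ((ladder b).deleteEdges E).ConnectedComponent | C.supp.Infinite}.Finite :=
  let ⟨_, _, h⟩ := ladder_setOf_supp_infinite_subset hb E
  ((Set.toFinite _).image _).subset h

lemma ladder_comp_le_two (E : List (ℕ × ℕ)) : (ladder b).comp E ≤ 2 := by
  obtain ⟨a, c, h⟩ := ladder_setOf_supp_infinite_subset hb E
  calc (ladder b).comp E ≤ (((ladder b).deleteEdges E).connectedComponentMk '' {a, c}).ncard :=
        Set.ncard_le_ncard h ((Set.toFinite _).image _)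
    _ ≤ ({a, c} : Set ℕ).ncard := Set.ncard_image_le (Set.toFinite _)
    _ ≤ ({c} : Set ℕ).ncard + 1 := Set.ncard_insert_le a {c}
    _ = 2 := by rw [Set.ncard_singleton]

/-- The part of the ladder above `2t` stays connected through the rung `{2t + 1, 2t + 2}`. -/
lemma ladder_comp_le_one {t : ℕ} (ht : b t = true) {E : List (ℕ × ℕ)}
    (hE : ∀ x ∈ E, x.1 ≤ 2 * t ∨ x.2 ≤ 2 * t) : (ladder b).comp E ≤ 1 := by
  have hE' : ∀ x ∈ E, x.1 < 2 * t + 1 ∨ x.2 < 2 * t + 1 := fun x hx => by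
    have := hE x hx
    omega
  have hbt : ∀ j, t + 1 ≤ j → b j = false := fun j hj =>
    Bool.eq_false_iff.mpr fun hbj => by have := hb hbj ht; omega
  have hrung : ((ladder b).deleteEdges E).Reachable (2 * (t + 1)) (2 * (t + 1) + 1) :=
    (CGraph.deleteEdges_adj_of_le hE' (ladder_adj_rung ht) le_rfl (by omega)).symm.reachable.trans
      (CGraph.deleteEdges_adj_of_le hE' (ladder_adj_odd t) le_rfl (by omega)).reachable
  calc (ladder b).comp E ≤ ({2 * (t + 1) + 1} : Set ℕ).ncard :=
        ncard_setOf_supp_infinite_le (Set.finite_Iio (2 * (t + 1))) (Set.finite_singleton _)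
          fun v hv => ⟨_, rfl, (ladder_reachable_of_le (fun x hx => by have := hE x hx; omega)
            hbt (not_lt.mp hv)).elim (·.trans hrung) id⟩
    _ = 1 := Set.ncard_singleton _

/-- The two infinite pieces are the even ray from `2t + 2` on and the rest. -/
lemma ladder_two_le_comp_rung {t : ℕ} (ht : b t = true) :
    2 ≤ (ladder b).comp [(2 * t + 1, 2 * t + 2)] := by
  have hE : ∀ x ∈ [(2 * t + 1, 2 * t + 2)], x.1 < 2 * t + 2 ∨ x.2 < 2 * t + 2 := by simp
  have hbt : ∀ j, t + 1 ≤ j → b j = false := fun j hj =>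
    Bool.eq_false_iff.mpr fun hbj => by have := hb hbj ht; omega
  refine two_le_ncard_setOf_supp_infinite (ladder_setOf_supp_infinite_finite hb _)
    (CGraph.ofParent_deleteEdges_connectedComponentMk_ne
      (fun v => decide (v % 2 = 0 ∧ 2 * t + 2 ≤ v)) ?_ (by simp; omega))
    (ladder_supp_even_infinite (m := t + 1) hE (by omega) hbt)
    (ladder_supp_odd_infinite (m := t + 1) hE (by omega))
  intro v hv h1 h2
  simp only [List.mem_singleton, Prod.mk.injEq] at h1 h2
  unfold ladderParent at h1 h2 ⊢
  split_ifs at h1 h2 ⊢ with hodd hflag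
  · exact decide_eq_decide.mpr (by omega)
  · have := hb hflag ht
    omega
  · have : v / 2 - 1 ≠ t := fun h => hflag (h ▸ ht)
    exact decide_eq_decide.mpr (by omega)

end AtMostOneFlag

lemma ladder_two_le_comp_zero_one (hb : ∀ k, b k = false) : 2 ≤ (ladder b).comp [(0, 1)] := by
  have hE : ∀ x ∈ [((0 : ℕ), (1 : ℕ))], x.1 < 1 ∨ x.2 < 1 := by simp
  refine two_le_ncard_setOf_supp_infinite
    (ladder_setOf_supp_infinite_finite (fun k hk => by simp [hb] at hk) _)
    (CGraph.ofParent_deleteEdges_connectedComponentMk_ne (fun v => v % 2) ?_ (a := 2 * 1)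
      (c := 2 * 0 + 1) (by simp))
    (ladder_supp_even_infinite (M := 1) hE (by omega) fun j _ => hb j)
    (ladder_supp_odd_infinite hE le_rfl)
  intro v hv h1 h2
  simp only [List.mem_singleton, Prod.mk.injEq] at h1 h2
  simp only [ladderParent, hb, Bool.false_eq_true, ↓reduceIte] at h1 h2 ⊢
  split_ifs at h1 h2 ⊢ <;> omega

section AtMostOneFlag

variable (hb : {k | b k = true}.Subsingleton)
include hb

lemma ladder_numEnds : (ladder b).numEnds = 2 := by
  refine le_antisymm (iSup_le fun E => by exact_mod_cast ladder_comp_le_two hb E) ?_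
  by_cases h : ∃ t, b t = true
  · obtain ⟨t, ht⟩ := h
    exact le_iSup_of_le [(2 * t + 1, 2 * t + 2)] (by exact_mod_cast ladder_two_le_comp_rung hb ht)
  · have hfalse : ∀ k, b k = false := fun k => by simpa using not_exists.mp h k
    exact le_iSup_of_le [(0, 1)] (by exact_mod_cast ladder_two_le_comp_zero_one hfalse)

lemma ladder_zero_one_mem_sep_iff : [(0, 1)] ∈ (ladder b).Sep ↔ ∀ k, b k = false := by
  refine ⟨fun h k => Bool.eq_false_iff.mpr fun hk => ?_, ladder_two_le_comp_zero_one⟩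
  have := ladder_comp_le_one hb hk (E := [(0, 1)]) (by simp)
  exact absurd h (by simp only [CGraph.Sep, Set.mem_ofPred_eq]; omega)

lemma lt_edgeBound_of_mem_sep {t : ℕ} (ht : b t = true) {E : List (ℕ × ℕ)}
    (hE : E ∈ (ladder b).Sep) : t < edgeBound E := by
  by_contra h
  have := ladder_comp_le_one hb ht (E := E) fun x hx => by have := add_le_edgeBound hx; omega
  exact absurd hE (by simp only [CGraph.Sep, Set.mem_ofPred_eq]; omega)

end AtMostOneFlag

end Ladder

lemma primrec_edgeBound : Primrec edgeBound := by
  have hadd : Primrec₂ fun (_ : List (ℕ × ℕ)) (x : ℕ × ℕ) => x.1 + x.2 :=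
    (Primrec.nat_add.comp (Primrec.fst.comp Primrec.snd) (Primrec.snd.comp Primrec.snd)).to₂
  have hsum : Primrec fun l : List ℕ => l.sum :=
    (Primrec.list_foldr Primrec.id (Primrec.const 0)
      (Primrec.nat_add.comp (Primrec.fst.comp Primrec.snd)
        (Primrec.snd.comp Primrec.snd)).to₂).of_eq fun l => by simp [List.sum_eq_foldr]
  exact hsum.comp (Primrec.list_map Primrec.id hadd)

section PrimrecLadder

variable {f : ℕ → ℕ → Bool}

lemma primrec_ladderParent (hf : Primrec₂ f) : Primrec₂ fun e v => ladderParent (f e) v := by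
  have hodd : PrimrecPred fun x : ℕ × ℕ => x.2 % 2 = 1 :=
    Primrec.eq.comp (Primrec.nat_mod.comp Primrec.snd (Primrec.const 2)) (Primrec.const 1)
  have hflag : PrimrecPred fun x : ℕ × ℕ => f x.1 (x.2 / 2 - 1) = true :=
    Primrec.eq.comp (hf.comp Primrec.fst (Primrec.nat_sub.comp
      (Primrec.nat_div.comp Primrec.snd (Primrec.const 2)) (Primrec.const 1))) (Primrec.const true)
  have hsub : ∀ c, Primrec fun x : ℕ × ℕ => x.2 - c := fun c =>
    Primrec.nat_sub.comp Primrec.snd (Primrec.const c)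
  exact Primrec.ite hodd (hsub 2) (Primrec.ite hflag (hsub 1) (hsub 2))

lemma primrec_ladder_adj (hf : Primrec₂ f) :
    Primrec fun x : ℕ × ℕ × ℕ => (ladder (f x.1)).adj x.2.1 x.2.2 := by
  have hp := primrec_ladderParent hf
  have hu : Primrec fun x : ℕ × ℕ × ℕ => x.2.1 := Primrec.fst.comp Primrec.snd
  have hv : Primrec fun x : ℕ × ℕ × ℕ => x.2.2 := Primrec.snd.comp Primrec.snd
  have hedge : ∀ {a c : ℕ × ℕ × ℕ → ℕ}, Primrec a → Primrec c →
      PrimrecPred fun x => 0 < a x ∧ ladderParent (f x.1) (a x) = c x := fun ha hc =>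
    (Primrec.nat_lt.comp (Primrec.const 0) ha).and
      (Primrec.eq.comp (hp.comp Primrec.fst ha) hc)
  exact ((hedge hu hv).or (hedge hv hu)).decide

end PrimrecLadder

open Nat.Partrec (Code)

def haltsWithin (e k : ℕ) : Bool := (Code.evaln k (Denumerable.ofNat Code e) e).isSome

/-- The `e`-th program on input `e` halts after exactly `k + 1` steps. -/
def haltsAtStep (e k : ℕ) : Bool := haltsWithin e (k + 1) && !haltsWithin e k

lemma primrec_haltsWithin : Primrec₂ haltsWithin :=
  Primrec.option_isSome.comp (Code.primrec_evaln.comp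
    ((Primrec.snd.pair ((Primrec.ofNat Code).comp Primrec.fst)).pair Primrec.fst))

lemma primrec_haltsAtStep : Primrec₂ haltsAtStep :=
  Primrec.and.comp (primrec_haltsWithin.comp Primrec.fst (Primrec.succ.comp Primrec.snd))
    (Primrec.not.comp primrec_haltsWithin)

lemma haltsWithin_mono {e k k' : ℕ} (h : k ≤ k') (hk : haltsWithin e k = true) :
    haltsWithin e k' = true := by
  obtain ⟨x, hx⟩ := Option.isSome_iff_exists.mp hk
  exact Option.isSome_iff_exists.mpr ⟨x, Code.evaln_mono h hx⟩

lemma mem_K₀_iff_exists_haltsWithin {e : ℕ} : e ∈ K₀ ↔ ∃ k, haltsWithin e k = true := by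
  simp only [K₀, evalIdx, Set.mem_ofPred_eq, Part.dom_iff_mem, haltsWithin,
    Option.isSome_iff_exists, Code.evaln_complete]
  exact exists_comm

lemma haltsAtStep_subsingleton (e : ℕ) : {k | haltsAtStep e k = true}.Subsingleton := by
  intro k hk k' hk'
  simp only [haltsAtStep, Set.mem_ofPred_eq, Bool.and_eq_true, Bool.not_eq_true'] at hk hk'
  by_contra hne
  rcases Nat.lt_or_gt_of_ne hne with h | h
  · simp [haltsWithin_mono h hk.1] at hk'
  · simp [haltsWithin_mono h hk'.1] at hk

lemma exists_haltsAtStep_of_haltsWithin {e : ℕ} :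
    ∀ {k}, haltsWithin e k = true → ∃ j, haltsAtStep e j = true
  | 0, h => by simp [haltsWithin, Code.evaln] at h
  | k + 1, h => by
    by_cases hk : haltsWithin e k = true
    · exact exists_haltsAtStep_of_haltsWithin hk
    · exact ⟨k, by simp [haltsAtStep, h, hk]⟩

lemma mem_K₀_iff_exists_haltsAtStep {e : ℕ} : e ∈ K₀ ↔ ∃ k, haltsAtStep e k = true := by
  rw [mem_K₀_iff_exists_haltsWithin]
  refine ⟨fun ⟨_, h⟩ => exists_haltsAtStep_of_haltsWithin h, fun ⟨k, h⟩ => ⟨k + 1, ?_⟩⟩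
  simp only [haltsAtStep, Bool.and_eq_true] at h
  exact h.1

lemma ce_K₀ : CE K₀ :=
  ⟨fun e => evalIdx e e,
    Code.eval_part.comp ((Computable.ofNat Code).comp Computable.id) Computable.id,
    fun _ => Iff.rfl⟩

/-- The index of `c` curried with `n` runs `c` on `n` whatever its input is, in particular on
its own index. -/
lemma manyOneReducible_K₀_of_ce {B : Set ℕ} (hB : CE B) : (· ∈ B) ≤₀ (· ∈ K₀) := by
  obtain ⟨f, hf, hfB⟩ := hB
  obtain ⟨c, hc⟩ := Code.exists_code.mp
    (Partrec.nat_iff.mp (hf.comp (Primrec.fst.comp Primrec.unpair).to_comp))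
  refine ⟨fun n => Encodable.encode (c.curry n),
    (Primrec.encode.comp (Code.primrec₂_curry.comp (Primrec.const c) Primrec.id)).to_comp,
    fun n => ?_⟩
  change n ∈ B ↔ (evalIdx _ _).Dom
  rw [evalIdx, Denumerable.ofNat_encode, Code.eval_curry, hc, hfB]
  simp

lemma pi1Complete_compl_K₀ : Pi1Complete K₀ᶜ := by
  refine ⟨by rw [Pi1, compl_compl]; exact ce_K₀, fun B hB => ?_⟩
  obtain ⟨g, hg, hgB⟩ := manyOneReducible_K₀_of_ce hB
  exact ⟨g, hg, fun n => by simpa using not_congr (hgB n)⟩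

lemma recIn_of_nat_partrec (O : ℕ →. ℕ) {f : ℕ →. ℕ} (hf : Nat.Partrec f) : RecIn O f := by
  induction hf with
  | zero => exact ⟨.zero, rfl⟩
  | succ => exact ⟨.succ, rfl⟩
  | left => exact ⟨.left, rfl⟩
  | right => exact ⟨.right, rfl⟩
  | pair _ _ ihf ihg =>
    obtain ⟨⟨cf, rfl⟩, ⟨cg, rfl⟩⟩ := And.intro ihf ihg
    exact ⟨.pair cf cg, rfl⟩
  | comp _ _ ihf ihg =>
    obtain ⟨⟨cf, rfl⟩, ⟨cg, rfl⟩⟩ := And.intro ihf ihg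
    exact ⟨.comp cf cg, rfl⟩
  | prec _ _ ihf ihg =>
    obtain ⟨⟨cf, rfl⟩, ⟨cg, rfl⟩⟩ := And.intro ihf ihg
    exact ⟨.prec cf cg, rfl⟩
  | rfind _ ihf =>
    obtain ⟨cf, rfl⟩ := ihf
    exact ⟨.rfind cf, rfl⟩

lemma recIn_pair_oracle (h : ℕ → ℕ) {g : ℕ → ℕ} (hg : Computable g) :
    RecIn (fun n => Part.some (h n)) fun n => Part.some (g (Nat.pair n (h n))) := by
  obtain ⟨cg, hcg⟩ := recIn_of_nat_partrec (fun n => Part.some (h n))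
    (Partrec.nat_iff.mp hg.partrec)
  obtain ⟨cid, hcid⟩ := recIn_of_nat_partrec (fun n => Part.some (h n))
    (Partrec.nat_iff.mp Computable.id.partrec)
  refine ⟨.comp cg (.pair cid .oracle), funext fun n => ?_⟩
  have hpair : (OCode.pair cid .oracle).eval (fun n => Part.some (h n)) n =
      Part.some (Nat.pair n (h n)) := by
    simp [OCode.eval, hcid, Seq.seq]
  change (OCode.pair cid .oracle).eval _ n >>= cg.eval _ = _
  rw [hpair, hcg]
  exact Part.bind_some _ _

def haltingLadder (e : ℕ) : CGraph := ladder (haltsAtStep e)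

lemma setOf_zero_one_mem_sep_haltingLadder :
    {e | [((0 : ℕ), (1 : ℕ))] ∈ (haltingLadder e).Sep} = K₀ᶜ := by
  ext e
  simp [haltingLadder, ladder_zero_one_mem_sep_iff (haltsAtStep_subsingleton e),
    mem_K₀_iff_exists_haltsAtStep]

lemma mem_K₀_iff_haltsWithin_edgeBound {E : List (ℕ × ℕ)} {n : ℕ}
    (hE : E ∈ (haltingLadder n).Sep) : n ∈ K₀ ↔ haltsWithin n (edgeBound E) = true := by
  refine ⟨fun hn => ?_, fun h => mem_K₀_iff_exists_haltsWithin.mpr ⟨_, h⟩⟩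
  obtain ⟨t, ht⟩ := mem_K₀_iff_exists_haltsAtStep.mp hn
  have hhalts : haltsWithin n (t + 1) = true := by
    simp only [haltsAtStep, Bool.and_eq_true] at ht
    exact ht.1
  exact haltsWithin_mono (lt_edgeBound_of_mem_sep (haltsAtStep_subsingleton n) ht hE) hhalts

lemma uniformlyHC_haltingLadder : UniformlyHC haltingLadder :=
  uniformlyHC_of_adj_le_add 2 (Computable.const true) (primrec_ladder_adj primrec_haltsAtStep)
    fun _ _ _ => ladder_adj_le_add

/-- On `Nat.pair n (encode E)` for a separating set `E` of `haltingLadder n`, this decides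
`n ∈ K₀`. -/
def haltingDecider (x : ℕ) : ℕ :=
  if haltsWithin x.unpair.1 (edgeBound ((Encodable.decode x.unpair.2).getD [])) then 1 else 0

lemma computable_haltingDecider : Computable haltingDecider :=
  (Primrec.ite (Primrec.eq.comp (primrec_haltsWithin.comp (Primrec.fst.comp Primrec.unpair)
      (primrec_edgeBound.comp (Primrec.option_getD.comp
        (Primrec.decode.comp (Primrec.snd.comp Primrec.unpair)) (Primrec.const []))))
      (Primrec.const true))
    (Primrec.const 1) (Primrec.const 0)).to_comp

lemma recIn_chi_K₀_of_forall_mem_sep {f : ℕ → List (ℕ × ℕ)}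
    (hf : ∀ e, f e ∈ (haltingLadder e).Sep) :
    RecIn (fun n => Part.some (Encodable.encode (f n))) (chi K₀) := by
  have hchi : chi K₀ =
      fun n => Part.some (haltingDecider (Nat.pair n (Encodable.encode (f n)))) := by
    funext n
    simp [chi, haltingDecider, Set.indicator, mem_K₀_iff_haltsWithin_edgeBound (hf n)]
  exact hchi ▸ recIn_pair_oracle _ computable_haltingDecider

/-- There is a uniformly highly computable sequence of graphs, each a tree with
exactly two ends, such that (1) `{e : [(0,1)] ∈ Sep(G_e)}` is `Π⁰₁`-complete, and (2) every
function choosing a witness of separation `f(e) ∈ Sep(G_e)` computes the halting set. -/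
theorem stmt_14 :
    ∃ Gs : ℕ → CGraph, UniformlyHC Gs ∧
      (∀ e, (Gs e).Connected ∧ (Gs e).toSimpleGraph.IsAcyclic ∧ (Gs e).numEnds = 2) ∧
      Pi1Complete {e | [((0 : ℕ), (1 : ℕ))] ∈ (Gs e).Sep} ∧
      (∀ f : ℕ → List (ℕ × ℕ), (∀ e, f e ∈ (Gs e).Sep) →
        RecIn (fun n => Part.some (Encodable.encode (f n))) (chi K₀)) :=
  ⟨haltingLadder, uniformlyHC_haltingLadder,
    fun e => ⟨CGraph.ofParent_connected (hp := fun _ => ladderParent_lt _),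
      CGraph.ofParent_isAcyclic (hp := fun _ => ladderParent_lt _),
      ladder_numEnds (haltsAtStep_subsingleton e)⟩,
    setOf_zero_one_mem_sep_haltingLadder ▸ pi1Complete_compl_K₀,
    fun _ => recIn_chi_K₀_of_forall_mem_sep⟩
end
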